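/- arXiv:2309.01628 — 2 statements merged into one kernel-verified Lean document; each statement's English description precedes it below -/
import Mathlib

section
/- In the setting of the previous statement, let w : S^n → ℝ be any weight function on length-n words. If E is an (n,K)-spanning set and F is an (n,K)-separated set, then ∑_{x ∈ F} e^{w(𝒞_{[0,n)}(x))} ≤ ∑_{y ∈ E} e^{w(𝒞_{[0,n)}(y))}. -/
/-- Weighted comparison between separated and spanning sums (Proposition 3.4). -/
theorem separated_sum_le_spanning_sum {Q S : Type*} (c : Q → ℕ → S) (n : ℕ)
    (K : Set Q) (E F : Finset Q) (w : (Fin n → S) → ℝ) (hFK : ↑F ⊆ K)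
    (hspan : ∀ x ∈ K, ∃ y ∈ E, ∀ j < n, c x j = c y j)
    (hsep : ∀ x ∈ F, ∀ y ∈ F, x ≠ y → ∃ j < n, c x j ≠ c y j) :
    ∑ x ∈ F, Real.exp (w (fun j : Fin n => c x j.1)) ≤
      ∑ y ∈ E, Real.exp (w (fun j : Fin n => c y j.1)) := by
  classical
  have hch : ∀ x ∈ F, ∃ y ∈ E, ∀ j < n, c x j = c y j := fun x hx =>
    hspan x (hFK hx)
  choose! g hgE hgw using hch
  have hinj : Set.InjOn g F := by
    intro x hx y hy hxy
    by_contra hne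
    obtain ⟨j, hj, hcj⟩ := hsep x (by simpa using hx) y (by simpa using hy) hne
    exact hcj ((hgw x (by simpa using hx) j hj).trans
      (hxy ▸ (hgw y (by simpa using hy) j hj).symm))
  calc ∑ x ∈ F, Real.exp (w (fun j : Fin n => c x j.1))
      = ∑ x ∈ F, Real.exp (w (fun j : Fin n => c (g x) j.1)) := by
        refine Finset.sum_congr rfl fun x hx => ?_
        congr 1
        exact congrArg w (funext fun j => hgw x hx j.1 j.2)
    _ = ∑ y ∈ F.image g, Real.exp (w (fun j : Fin n => c y j.1)) := by
        rw [Finset.sum_image fun x hx y hy h => hinj (by simpa using hx) (by simpa using hy) h]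
    _ ≤ ∑ y ∈ E, Real.exp (w (fun j : Fin n => c y j.1)) := by
        refine Finset.sum_le_sum_of_subset_of_nonneg ?_ fun _ _ _ => (Real.exp_pos _).le
        intro y hy
        obtain ⟨x, hx, rfl⟩ := Finset.mem_image.mp hy
        exact hgE x hx
end

section
/- Let Q be a compact metric space, K ⊆ Q compact, c > 0, and suppose p : C(Q,ℝ) → ℝ satisfies: p(f+g) ≤ p(f)+p(g), p(kf) = k·p(f) for k ≥ 0, p(1) = 1, p(f) ≤ ‖f‖_∞, and p(g) = 0 whenever g ≤ 0. Then there exists a Borel probability measure μ on Q such that ∫ f dμ ≤ p(f) for all f ∈ C(Q,ℝ). Moreover if p(f) = 0 for every continuous 0 ≤ f ≤ 1 vanishing on K, then μ(K) = 1. -/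
/-!
Hahn–Banach gives a linear functional `Λ ≤ p` with `Λ 1 = p 1 = 1`; since `p` vanishes on
nonpositive functions, `Λ f = -Λ (-f) ≥ -p (-f) = 0` for `f ≥ 0`, so the Riesz–Markov–Kakutani
theorem represents `Λ` by a probability measure `μ`. If `p` kills the `[0,1]`-valued functions
vanishing on `K`, pick one whose zero set is exactly `K` (metric spaces are perfectly normal):
its `μ`-integral is `0`, so it vanishes `μ`-a.e. and `μ Kᶜ = 0`.
-/

open MeasureTheory CompactlySupported

theorem exists_linearMap_le_sublinear_eq {E : Type*} [AddCommGroup E] [Module ℝ E]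
    (N : E → ℝ) (N_hom : ∀ c : ℝ, 0 < c → ∀ x, N (c • x) = c * N x)
    (N_add : ∀ x y, N (x + y) ≤ N x + N y) (x : E) :
    ∃ g : E →ₗ[ℝ] ℝ, g x = N x ∧ ∀ y, g y ≤ N y := by
  have N_zero : N 0 = 0 := by
    have := N_hom 2 two_pos 0
    rw [smul_zero] at this
    linarith
  have N_neg : -N x ≤ N (-x) := by
    have := N_add x (-x)
    rw [add_neg_cancel, N_zero] at this
    linarith
  have N_smul (t : ℝ) : t * N x ≤ N (t • x) := by
    rcases lt_trichotomy t 0 with ht | rfl | ht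
    · rw [← neg_neg t, neg_smul, ← smul_neg, N_hom _ (neg_pos.2 ht)]
      nlinarith
    · simp [N_zero]
    · rw [N_hom t ht]
  let f := LinearPMap.mkSpanSingleton' (σ := RingHom.id ℝ) x (N x) fun c hc => by
    rcases smul_eq_zero.1 hc with rfl | rfl
    · simp
    · simp [N_zero]
  obtain ⟨g, hgf, hgN⟩ := exists_extension_of_le_sublinear f N N_hom N_add <| by
    rintro ⟨y, hy⟩
    obtain ⟨t, rfl⟩ := Submodule.mem_span_singleton.1 hy
    rw [LinearPMap.mkSpanSingleton'_apply]
    exact N_smul t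
  refine ⟨g, ?_, hgN⟩
  exact (hgf ⟨x, Submodule.mem_span_singleton_self x⟩).trans
    (LinearPMap.mkSpanSingleton'_apply_self _ _ _ _)

theorem exists_isProbabilityMeasure_integral_eq {X : Type*} [TopologicalSpace X] [T2Space X]
    [CompactSpace X] [MeasurableSpace X] [BorelSpace X]
    (Λ : C(X, ℝ) →ₚ[ℝ] ℝ) (hΛ : Λ 1 = 1) :
    ∃ μ : Measure X, IsProbabilityMeasure μ ∧ ∀ f : C(X, ℝ), ∫ x, f x ∂μ = Λ f := by
  let Λc : C_c(X, ℝ) →ₚ[ℝ] ℝ :=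
    { toFun g := Λ g.toContinuousMap
      map_add' g g' := map_add Λ _ _
      map_smul' c g := map_smul Λ c _
      monotone' g g' hgg' := Λ.monotone' hgg' }
  have hμ (f : C(X, ℝ)) : ∫ x, f x ∂(RealRMK.rieszMeasure Λc) = Λ f :=
    RealRMK.integral_rieszMeasure Λc (CompactlySupportedContinuousMap.continuousMapEquiv f)
  refine ⟨RealRMK.rieszMeasure Λc, isProbabilityMeasure_iff_real.2 ?_, hμ⟩
  simpa [hΛ] using hμ 1

theorem measure_compl_eq_zero_of_integral_nonpos {X : Type*} [TopologicalSpace X]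
    [PerfectlyNormalSpace X] [MeasurableSpace X] [OpensMeasurableSpace X]
    (μ : Measure X) [IsFiniteMeasure μ] {K : Set X} (hK : IsClosed K)
    (h : ∀ f : C(X, ℝ), (∀ x, 0 ≤ f x) → (∀ x, f x ≤ 1) → (∀ x ∈ K, f x = 0) →
      ∫ x, f x ∂μ ≤ 0) :
    μ Kᶜ = 0 := by
  obtain ⟨f, hKf, hf01⟩ := perfectlyNormalSpace_iff_forall_isClosed_preimage_zero.1 ‹_› K hK
  have hf_nonneg : 0 ≤ ⇑f := fun x => (hf01 x).1
  have hf_int : Integrable f μ :=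
    Integrable.of_bound f.continuous.aestronglyMeasurable 1 <| .of_forall fun x => by
      rw [Real.norm_of_nonneg (hf01 x).1]
      exact (hf01 x).2
  have hf_zero : f =ᵐ[μ] 0 := by
    refine (integral_eq_zero_iff_of_nonneg hf_nonneg hf_int).1
      (le_antisymm ?_ (integral_nonneg hf_nonneg))
    exact h f hf_nonneg (fun x => (hf01 x).2) fun x hx => by simpa using hKf.subset hx
  rw [hKf]
  exact ae_iff.1 hf_zero

theorem frostman_functional_general {Q : Type*} [MetricSpace Q] [CompactSpace Q]
    [MeasurableSpace Q] [BorelSpace Q]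
    (K : Set Q) (hK : IsCompact K)
    (p : C(Q, ℝ) → ℝ)
    (hadd : ∀ f g : C(Q, ℝ), p (f + g) ≤ p f + p g)
    (hhom : ∀ (k : ℝ) (f : C(Q, ℝ)), 0 ≤ k → p (k • f) = k * p f)
    (hone : p 1 = 1)
    (hneg : ∀ g : C(Q, ℝ), (∀ x, g x ≤ 0) → p g = 0) :
    ∃ μ : Measure Q, IsProbabilityMeasure μ ∧
      (∀ f : C(Q, ℝ), ∫ x, f x ∂μ ≤ p f) ∧
      ((∀ f : C(Q, ℝ), (∀ x, 0 ≤ f x) → (∀ x, f x ≤ 1) →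
          (∀ x ∈ K, f x = 0) → p f = 0) → μ K = 1) := by
  obtain ⟨Λ, hΛ1, hΛp⟩ := exists_linearMap_le_sublinear_eq p (fun k hk f => hhom k f hk.le) hadd 1
  have hΛ_nonneg (f : C(Q, ℝ)) (hf : 0 ≤ f) : 0 ≤ Λ f := by
    have h := hΛp (-f)
    rw [map_neg, hneg (-f) fun x => neg_nonpos.2 (hf x)] at h
    linarith
  obtain ⟨μ, hμ, hμΛ⟩ := exists_isProbabilityMeasure_integral_eq
    (PositiveLinearMap.mk₀ Λ hΛ_nonneg) (hΛ1.trans hone)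
  have hμp (f : C(Q, ℝ)) : ∫ x, f x ∂μ ≤ p f := (hμΛ f).trans_le (hΛp f)
  refine ⟨μ, hμ, hμp, fun hvanish => ?_⟩
  rw [← prob_compl_eq_zero_iff hK.measurableSet]
  exact measure_compl_eq_zero_of_integral_nonpos μ hK.isClosed fun f hf0 hf1 hfK =>
    (hμp f).trans (hvanish f hf0 hf1 hfK).le

/-- Functional-analytic core of the dynamical Frostman lemma (Lemma 4.10):
a sublinear functional `p` on `C(Q,ℝ)` dominates integration against some Borel
probability measure `μ`; if moreover `p` kills all `[0,1]`-valued functions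
vanishing on `K`, then `μ(K) = 1`. -/
theorem frostman_functional {Q : Type*} [MetricSpace Q] [CompactSpace Q]
    [MeasurableSpace Q] [BorelSpace Q]
    (K : Set Q) (hK : IsCompact K) (c : ℝ) (hc : 0 < c)
    (p : C(Q, ℝ) → ℝ)
    (hadd : ∀ f g : C(Q, ℝ), p (f + g) ≤ p f + p g)
    (hhom : ∀ (k : ℝ) (f : C(Q, ℝ)), 0 ≤ k → p (k • f) = k * p f)
    (hone : p 1 = 1)
    (hnorm : ∀ f : C(Q, ℝ), p f ≤ ‖f‖)
    (hneg : ∀ g : C(Q, ℝ), (∀ x, g x ≤ 0) → p g = 0) :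
    ∃ μ : Measure Q, IsProbabilityMeasure μ ∧
      (∀ f : C(Q, ℝ), ∫ x, f x ∂μ ≤ p f) ∧
      ((∀ f : C(Q, ℝ), (∀ x, 0 ≤ f x) → (∀ x, f x ≤ 1) →
          (∀ x ∈ K, f x = 0) → p f = 0) → μ K = 1) :=
  frostman_functional_general K hK p hadd hhom hone hneg
end
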